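/- Let H be a self-adjoint operator bounded below with discrete negative spectrum, V ≥ 0 a bounded nonnegative operator, and suppose 0 is not an eigenvalue of H. Then the number of nonpositive eigenvalues of H − V is at most the number of negative eigenvalues of H − 2V: N_{≤0}(H − V) ≤ N_-(H − 2V). -/

import Mathlib

/-!
If `⟪(H - V) u, u⟫ ≤ 0` on a subspace `W`, then `B = H - 2V` is nonpositive on `W`, and injective
on `W`: `B u = 0` forces `⟪V u, u⟫ = 0`, hence `V u = 0` and `H u = 0`. So it suffices to bound
the dimension of a `B`-nonpositive subspace `W` on which `B` is injective by `N_-(B)`.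

`B` is negative definite on every complement of the radical `R` of the form `⟪B ·, ·⟫` on `W`.
The form vanishes on `R`, and `1 - tB` (small `t > 0`) moves `R` onto a `B`-negative subspace of
the same dimension, since `⟪B (φ - tBφ), φ - tBφ⟫ ≤ -t (2 - t‖B‖) ‖Bφ‖²`. If `R` is
finite-dimensional, the complement can be chosen `B`-orthogonal to this image and the two
negative subspaces add up; otherwise both pieces have dimension at most `N_-(B) ≥ ℵ₀`.
-/

open scoped InnerProductSpace

variable {E : Type*} [NormedAddCommGroup E] [InnerProductSpace ℝ E]

/-- The number of negative eigenvalues (dimension of the spectral subspace of `(−∞,0)`),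
via Glazman's variational characterization: the supremum of dimensions of subspaces on
which the quadratic form is negative definite. -/
noncomputable def negCount (T : E →L[ℝ] E) : Cardinal :=
  ⨆ W : {W : Submodule ℝ E // ∀ u ∈ W, u ≠ 0 → (inner ℝ (T u) u : ℝ) < 0},
    Module.rank ℝ W.1

/-- The number of nonpositive eigenvalues (dimension of the spectral subspace of
`(−∞,0]`), via the variational characterization. -/
noncomputable def nonposCount (T : E →L[ℝ] E) : Cardinal :=
  ⨆ W : {W : Submodule ℝ E // ∀ u ∈ W, (inner ℝ (T u) u : ℝ) ≤ 0},
    Module.rank ℝ W.1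

open Submodule

def IsNegDefOn (B : E →L[ℝ] E) (X : Submodule ℝ E) : Prop :=
  ∀ u ∈ X, u ≠ 0 → ⟪B u, u⟫_ℝ < 0

section IsNegDefOn

variable {B : E →L[ℝ] E} {X Y : Submodule ℝ E}

lemma IsNegDefOn.inner_map_self_nonpos (hX : IsNegDefOn B X) {u : E} (hu : u ∈ X) :
    ⟪B u, u⟫_ℝ ≤ 0 := by
  rcases eq_or_ne u 0 with rfl | hu0
  · simp
  · exact (hX u hu hu0).le

lemma IsNegDefOn.rank_le_negCount (hX : IsNegDefOn B X) : Module.rank ℝ X ≤ negCount B :=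
  le_ciSup (f := fun W : {W : Submodule ℝ E // IsNegDefOn B W} => Module.rank ℝ W.1)
    ⟨Module.rank ℝ E, by rintro _ ⟨W, rfl⟩; exact rank_le W.1⟩ ⟨X, hX⟩

lemma IsNegDefOn.disjoint (hX : IsNegDefOn B X) (horth : ∀ x ∈ X, ∀ y ∈ Y, ⟪B x, y⟫_ℝ = 0) :
    Disjoint X Y :=
  disjoint_def.2 fun x hxX hxY => by_contra fun hx0 => (hX x hxX hx0).ne (horth x hxX x hxY)

lemma IsNegDefOn.sup (hB : (B : E →ₗ[ℝ] E).IsSymmetric) (hX : IsNegDefOn B X) (hY : IsNegDefOn B Y)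
    (horth : ∀ x ∈ X, ∀ y ∈ Y, ⟪B x, y⟫_ℝ = 0) : IsNegDefOn B (X ⊔ Y) := by
  rintro _ hu hne
  obtain ⟨x, hx, y, hy, rfl⟩ := mem_sup.1 hu
  have hyx : ⟪B y, x⟫_ℝ = 0 := by rw [real_inner_comm, ← hB.apply_clm]; exact horth x hx y hy
  have hexp : ⟪B (x + y), x + y⟫_ℝ = ⟪B x, x⟫_ℝ + ⟪B y, y⟫_ℝ := by
    simp only [map_add, inner_add_left, inner_add_right, horth x hx y hy, hyx]
    ring
  rw [hexp]
  rcases eq_or_ne x 0 with rfl | hx0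
  · simpa using hY y hy (by simpa using hne)
  · linarith [hX x hx hx0, hY.inner_map_self_nonpos hy]

lemma IsNegDefOn.rank_add_rank_le_negCount (hB : (B : E →ₗ[ℝ] E).IsSymmetric) (hX : IsNegDefOn B X)
    (hY : IsNegDefOn B Y) (horth : ∀ x ∈ X, ∀ y ∈ Y, ⟪B x, y⟫_ℝ = 0) :
    Module.rank ℝ X + Module.rank ℝ Y ≤ negCount B := by
  rw [← rank_sup_add_rank_inf_eq, disjoint_iff.1 (hX.disjoint horth), rank_bot, add_zero]
  exact (hX.sup hB hY horth).rank_le_negCount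

end IsNegDefOn

lemma inner_map_add_smul_self {B : E →L[ℝ] E} (hB : (B : E →ₗ[ℝ] E).IsSymmetric) (u w : E)
    (x : ℝ) :
    ⟪B (u + x • w), u + x • w⟫_ℝ = ⟪B w, w⟫_ℝ * (x * x) + 2 * ⟪B u, w⟫_ℝ * x + ⟪B u, u⟫_ℝ := by
  have hwu : ⟪B w, u⟫_ℝ = ⟪B u, w⟫_ℝ := by rw [hB.apply_clm, real_inner_comm]
  simp only [map_add, map_smul, inner_add_left, inner_add_right, real_inner_smul_left,
    real_inner_smul_right, hwu]
  ring

lemma inner_map_eq_zero_of_nonpos_on {B : E →L[ℝ] E} (hB : (B : E →ₗ[ℝ] E).IsSymmetric)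
    {W : Submodule ℝ E} (hW : ∀ u ∈ W, ⟪B u, u⟫_ℝ ≤ 0) {u w : E} (hu : u ∈ W) (hw : w ∈ W)
    (h0 : ⟪B u, u⟫_ℝ = 0) : ⟪B u, w⟫_ℝ = 0 := by
  have hdiscr := discrim_le_zero_of_nonpos fun x : ℝ => by
    simpa only [inner_map_add_smul_self hB, h0] using hW _ (W.add_mem hu (W.smul_mem x hw))
  rw [discrim] at hdiscr
  nlinarith [sq_nonneg ⟪B u, w⟫_ℝ]

lemma apply_eq_zero_of_inner_map_self_eq_zero {V : E →L[ℝ] E}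
    (hV : (V : E →ₗ[ℝ] E).IsSymmetric) (hVpos : ∀ u : E, 0 ≤ ⟪V u, u⟫_ℝ) {u : E}
    (h0 : ⟪V u, u⟫_ℝ = 0) : V u = 0 := by
  have hdiscr := discrim_le_zero fun x : ℝ => by
    simpa only [inner_map_add_smul_self hV, h0] using hVpos (u + x • V u)
  rw [discrim, mul_zero, sub_zero] at hdiscr
  have hVV : ⟪V u, V u⟫_ℝ = 0 := by nlinarith [sq_nonneg ⟪V u, V u⟫_ℝ]
  exact inner_self_eq_zero.1 hVV

noncomputable def formRadical (B : E →L[ℝ] E) (W : Submodule ℝ E) : Submodule ℝ E :=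
  W ⊓ (W.map (B : E →ₗ[ℝ] E))ᗮ

section formRadical

variable {B : E →L[ℝ] E} {W : Submodule ℝ E}

lemma mem_formRadical {φ : E} :
    φ ∈ formRadical B W ↔ φ ∈ W ∧ ∀ w ∈ W, ⟪B w, φ⟫_ℝ = 0 := by
  simp [formRadical, mem_orthogonal]

lemma formRadical_le : formRadical B W ≤ W := fun _ hφ => (mem_formRadical.1 hφ).1

lemma inner_map_eq_zero_of_mem_formRadical (hB : (B : E →ₗ[ℝ] E).IsSymmetric) {φ w : E}
    (hφ : φ ∈ formRadical B W) (hw : w ∈ W) : ⟪B φ, w⟫_ℝ = 0 := by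
  rw [hB.apply_clm, real_inner_comm]
  exact (mem_formRadical.1 hφ).2 w hw

lemma mem_formRadical_of_inner_map_self_eq_zero (hB : (B : E →ₗ[ℝ] E).IsSymmetric)
    (hW : ∀ u ∈ W, ⟪B u, u⟫_ℝ ≤ 0) {u : E} (hu : u ∈ W) (h0 : ⟪B u, u⟫_ℝ = 0) :
    u ∈ formRadical B W := by
  refine mem_formRadical.2 ⟨hu, fun w hw => ?_⟩
  rw [hB.apply_clm, real_inner_comm]
  exact inner_map_eq_zero_of_nonpos_on hB hW hu hw h0

lemma isNegDefOn_of_disjoint_formRadical (hB : (B : E →ₗ[ℝ] E).IsSymmetric)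
    (hW : ∀ u ∈ W, ⟪B u, u⟫_ℝ ≤ 0) {U : Submodule ℝ E} (hUW : U ≤ W)
    (hU : Disjoint U (formRadical B W)) : IsNegDefOn B U := fun u hu hu0 =>
  (hW u (hUW hu)).lt_of_ne fun h0 =>
    hu0 (disjoint_def.1 hU u hu (mem_formRadical_of_inner_map_self_eq_zero hB hW (hUW hu) h0))

end formRadical

section Perturbation

variable {B : E →L[ℝ] E} {t : ℝ}

lemma inner_map_one_sub_smul_self_lt_zero (hB : (B : E →ₗ[ℝ] E).IsSymmetric) (ht : 0 < t)
    (htB : t * ‖B‖ < 2) {φ : E} (hφ : ⟪B φ, φ⟫_ℝ = 0) (hBφ : B φ ≠ 0) :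
    ⟪B ((1 - t • B) φ), (1 - t • B) φ⟫_ℝ < 0 := by
  have hnorm : 0 < ‖B φ‖ := norm_pos_iff.2 hBφ
  have hBB : ⟪B (B φ), B φ⟫_ℝ ≤ ‖B‖ * ‖B φ‖ ^ 2 :=
    calc ⟪B (B φ), B φ⟫_ℝ ≤ ‖B (B φ)‖ * ‖B φ‖ := real_inner_le_norm _ _
      _ ≤ ‖B‖ * ‖B φ‖ * ‖B φ‖ := by gcongr; exact B.le_opNorm _
      _ = ‖B‖ * ‖B φ‖ ^ 2 := by ring
  have hexp := inner_map_add_smul_self hB φ (B φ) (-t)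
  simp only [neg_smul, ← sub_eq_add_neg, hφ, real_inner_self_eq_norm_sq] at hexp
  simp only [sub_apply, one_apply_eq_self, smul_apply, hexp]
  nlinarith [mul_pos (mul_pos ht hnorm) hnorm]

variable {N : Submodule ℝ E}

lemma isNegDefOn_map_one_sub_smul (hB : (B : E →ₗ[ℝ] E).IsSymmetric) (ht : 0 < t)
    (htB : t * ‖B‖ < 2) (hN : ∀ φ ∈ N, ⟪B φ, φ⟫_ℝ = 0) (hinj : ∀ φ ∈ N, B φ = 0 → φ = 0) :
    IsNegDefOn B (N.map ((1 - t • B : E →L[ℝ] E) : E →ₗ[ℝ] E)) := by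
  rintro _ ⟨φ, hφ, rfl⟩ hne
  have hφ0 : φ ≠ 0 := by rintro rfl; exact hne (map_zero _)
  exact inner_map_one_sub_smul_self_lt_zero hB ht htB (hN φ hφ) fun h => hφ0 (hinj φ hφ h)

lemma rank_map_one_sub_smul (hB : (B : E →ₗ[ℝ] E).IsSymmetric) (ht : 0 < t)
    (htB : t * ‖B‖ < 2) (hN : ∀ φ ∈ N, ⟪B φ, φ⟫_ℝ = 0) (hinj : ∀ φ ∈ N, B φ = 0 → φ = 0) :
    Module.rank ℝ (N.map ((1 - t • B : E →L[ℝ] E) : E →ₗ[ℝ] E)) = Module.rank ℝ N := by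
  set f : E →ₗ[ℝ] E := ((1 - t • B : E →L[ℝ] E) : E →ₗ[ℝ] E)
  have hker : ∀ φ ∈ N, (1 - t • B) φ = 0 → φ = 0 := fun φ hφ hfφ => by
    by_contra hφ0
    have := inner_map_one_sub_smul_self_lt_zero hB ht htB (hN φ hφ) fun h => hφ0 (hinj φ hφ h)
    simp [hfφ] at this
  have hinjf : Function.Injective (f ∘ₗ N.subtype) := fun x y hxy =>
    Subtype.ext <| sub_eq_zero.1 <|
      hker _ (N.sub_mem x.2 y.2) (by rw [map_sub, sub_eq_zero]; exact hxy)
  rw [← rank_range_of_injective _ hinjf, LinearMap.range_comp, range_subtype]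

end Perturbation

-- Split `B w = B φ + k` with `φ ∈ R` and `k ⟂ B(R)`, possible as `B(R)` is finite-dimensional;
-- then `w = (w - φ) + φ`.
lemma le_inf_comap_orthogonal_map_sup (B : E →L[ℝ] E) {R W : Submodule ℝ E} (hRW : R ≤ W)
    [FiniteDimensional ℝ R] :
    W ≤ W ⊓ (R.map (B : E →ₗ[ℝ] E))ᗮ.comap (B : E →ₗ[ℝ] E) ⊔ R := by
  intro w hw
  obtain ⟨_, ⟨φ, hφ, rfl⟩, k, hk, hBw⟩ :=
    (R.map (B : E →ₗ[ℝ] E)).exists_add_mem_mem_orthogonal (B w)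
  have hφk : B (w - φ) = k := by rw [map_sub, hBw]; simp
  rw [← sub_add_cancel w φ]
  exact add_mem_sup ⟨W.sub_mem hw (hRW hφ), by simpa [hφk] using hk⟩ hφ

section Radical

variable {B : E →L[ℝ] E} {W : Submodule ℝ E} {t : ℝ}

lemma inner_map_self_eq_zero_of_mem_formRadical (hB : (B : E →ₗ[ℝ] E).IsSymmetric) {φ : E}
    (hφ : φ ∈ formRadical B W) : ⟪B φ, φ⟫_ℝ = 0 :=
  inner_map_eq_zero_of_mem_formRadical hB hφ (formRadical_le hφ)

lemma rank_formRadical_le_negCount (hB : (B : E →ₗ[ℝ] E).IsSymmetric) (ht : 0 < t)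
    (htB : t * ‖B‖ < 2) (hinj : ∀ u ∈ W, B u = 0 → u = 0) :
    Module.rank ℝ (formRadical B W) ≤ negCount B := by
  have hR : ∀ φ ∈ formRadical B W, ⟪B φ, φ⟫_ℝ = 0 := fun φ hφ =>
    inner_map_self_eq_zero_of_mem_formRadical hB hφ
  have hinjR : ∀ φ ∈ formRadical B W, B φ = 0 → φ = 0 := fun φ hφ => hinj φ (formRadical_le hφ)
  rw [← rank_map_one_sub_smul hB ht htB hR hinjR]
  exact (isNegDefOn_map_one_sub_smul hB ht htB hR hinjR).rank_le_negCount

lemma rank_le_negCount_of_finiteDimensional_formRadical (hB : (B : E →ₗ[ℝ] E).IsSymmetric)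
    (ht : 0 < t) (htB : t * ‖B‖ < 2) (hW : ∀ u ∈ W, ⟪B u, u⟫_ℝ ≤ 0)
    (hinj : ∀ u ∈ W, B u = 0 → u = 0) [FiniteDimensional ℝ (formRadical B W)] :
    Module.rank ℝ W ≤ negCount B := by
  set R := formRadical B W
  set U := W ⊓ (R.map (B : E →ₗ[ℝ] E))ᗮ.comap (B : E →ₗ[ℝ] E)
  set M := R.map ((1 - t • B : E →L[ℝ] E) : E →ₗ[ℝ] E)
  have hR : ∀ φ ∈ R, ⟪B φ, φ⟫_ℝ = 0 := fun φ hφ =>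
    inner_map_self_eq_zero_of_mem_formRadical hB hφ
  have hinjR : ∀ φ ∈ R, B φ = 0 → φ = 0 := fun φ hφ => hinj φ (formRadical_le hφ)
  have hUR : Disjoint U R := disjoint_def.2 fun u hu huR =>
    hinj u hu.1 (inner_self_eq_zero.1 ((mem_orthogonal _ _).1 hu.2 _ (mem_map_of_mem huR)))
  have horth : ∀ u ∈ U, ∀ ψ ∈ M, ⟪B u, ψ⟫_ℝ = 0 := by
    rintro u hu _ ⟨φ, hφ, rfl⟩
    have h1 : ⟪B u, φ⟫_ℝ = 0 := by
      rw [hB.apply_clm, real_inner_comm]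
      exact inner_map_eq_zero_of_mem_formRadical hB hφ hu.1
    have h2 : ⟪B u, B φ⟫_ℝ = 0 := by
      rw [real_inner_comm]
      exact (mem_orthogonal _ _).1 hu.2 _ (mem_map_of_mem hφ)
    simp [inner_sub_right, real_inner_smul_right, h1, h2]
  calc Module.rank ℝ W ≤ Module.rank ℝ U + Module.rank ℝ R :=
        (rank_mono (le_inf_comap_orthogonal_map_sup B formRadical_le)).trans
          (rank_add_le_rank_add_rank _ _)
    _ = Module.rank ℝ U + Module.rank ℝ M := by rw [rank_map_one_sub_smul hB ht htB hR hinjR]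
    _ ≤ negCount B :=
        (isNegDefOn_of_disjoint_formRadical hB hW inf_le_left hUR).rank_add_rank_le_negCount hB
          (isNegDefOn_map_one_sub_smul hB ht htB hR hinjR) horth

end Radical

theorem rank_le_negCount_of_nonpos {B : E →L[ℝ] E} (hB : (B : E →ₗ[ℝ] E).IsSymmetric)
    {W : Submodule ℝ E} (hW : ∀ u ∈ W, ⟪B u, u⟫_ℝ ≤ 0) (hinj : ∀ u ∈ W, B u = 0 → u = 0) :
    Module.rank ℝ W ≤ negCount B := by
  obtain ⟨t, ht, htB⟩ : ∃ t : ℝ, 0 < t ∧ t * ‖B‖ < 2 :=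
    ⟨(1 + ‖B‖)⁻¹, by positivity, by
      rw [inv_mul_eq_div, div_lt_iff₀ (by positivity)]; linarith [norm_nonneg B]⟩
  by_cases hfin : FiniteDimensional ℝ (formRadical B W)
  · exact rank_le_negCount_of_finiteDimensional_formRadical hB ht htB hW hinj
  have hR := rank_formRadical_le_negCount hB ht htB hinj
  have hℵ₀ : Cardinal.aleph0 ≤ Module.rank ℝ (formRadical B W) :=
    not_lt.1 (mt Module.rank_lt_aleph0_iff.1 hfin)
  obtain ⟨C, hC⟩ := (formRadical B W).exists_isCompl
  have hCW : IsNegDefOn B (C ⊓ W) :=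
    isNegDefOn_of_disjoint_formRadical hB hW inf_le_right (hC.symm.disjoint.mono_left inf_le_left)
  calc Module.rank ℝ W = Module.rank ℝ ↥(formRadical B W ⊔ C ⊓ W) := by
        rw [← sup_inf_assoc_of_le C formRadical_le, hC.sup_eq_top, top_inf_eq]
    _ ≤ Module.rank ℝ (formRadical B W) + Module.rank ℝ ↥(C ⊓ W) := rank_add_le_rank_add_rank _ _
    _ ≤ negCount B := Cardinal.add_le_of_le (hℵ₀.trans hR) hR hCW.rank_le_negCount

/-- If `H` is self-adjoint with `0` not an eigenvalue and `V ≥ 0`, then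
`N_{≤0}(H − V) ≤ N_-(H − 2V)`. -/
theorem stmt5 (H V : E →L[ℝ] E)
    (hH : ∀ u v : E, (inner ℝ (H u) v : ℝ) = inner ℝ u (H v))
    (hV : ∀ u v : E, (inner ℝ (V u) v : ℝ) = inner ℝ u (V v))
    (hVpos : ∀ u : E, 0 ≤ (inner ℝ (V u) u : ℝ))
    (hker : ∀ u : E, H u = 0 → u = 0) :
    nonposCount (H - V) ≤ negCount (H - (2:ℝ) • V) := by
  have hB : ((H - (2:ℝ) • V : E →L[ℝ] E) : E →ₗ[ℝ] E).IsSymmetric := fun u v => by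
    simp [inner_sub_left, inner_sub_right, real_inner_smul_left, real_inner_smul_right, hH, hV]
  have hquad : ∀ u, ⟪(H - (2:ℝ) • V) u, u⟫_ℝ = ⟪(H - V) u, u⟫_ℝ - ⟪V u, u⟫_ℝ := fun u => by
    simp only [sub_apply, smul_apply, inner_sub_left, real_inner_smul_left]; ring
  refine ciSup_le' fun ⟨W, hW⟩ => rank_le_negCount_of_nonpos hB
    (fun u hu => by linarith [hquad u, hW u hu, hVpos u]) fun u hu hBu => hker u ?_
  have hVu : V u = 0 := apply_eq_zero_of_inner_map_self_eq_zero hV hVpos <| by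
    linarith [hquad u, hW u hu, hVpos u, show ⟪(H - (2:ℝ) • V) u, u⟫_ℝ = 0 by simp [hBu]]
  simpa [hVu] using hBu
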